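/- If f belongs to the class S_H(K) of normalized K-quasiconformal harmonic mappings of the unit disk, then f belongs to the harmonic Bergman space a^p for every p with 0 < p < 1/α_K, where α_K is the order of the class S_H(K); that is, ∫_𝔻 |f|^p dA < ∞. -/

import Mathlib

/-!
For `w` in the disk, precomposing `f = h + conj g` with the disk automorphism
`z ↦ (z + w) / (1 + w̄ z)` and renormalizing gives another member of `S_H(K)`, whose analytic part
has second derivative `(1 - |w|²) h''(w) / h'(w) - 2 w̄` at `0`. Bounding this by `2 α_K` gives
`|h''/h'| ≤ (α + 1) / (1 - r) + (α - 1) / (1 + r)` on `|w| = r`. Integrating along radii yields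
`|h'(z)| ≤ 2^α (1 - |z|)^(-α-1)`, hence `|h|, |g| ≤ (2^α / α) (1 - |z|)^(-α)` since `|g'| < |h'|`,
and `(1 - |z|)^(-α p)` is integrable over the disk when `α p < 1`.
-/

open MeasureTheory Metric Complex

/-- `f = h + conj g` belongs to the class `S_H` of sense-preserving univalent harmonic
mappings of the unit disk, normalized by `h(0) = g(0) = 0`, `h'(0) = 1`. -/
def IsSH (h g : ℂ → ℂ) : Prop :=
  DifferentiableOn ℂ h (ball 0 1) ∧
  DifferentiableOn ℂ g (ball 0 1) ∧
  h 0 = 0 ∧ g 0 = 0 ∧ deriv h 0 = 1 ∧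
  (∀ z ∈ ball (0 : ℂ) 1, ‖deriv g z‖ < ‖deriv h z‖) ∧
  Set.InjOn (fun z => h z + (starRingEnd ℂ) (g z)) (ball 0 1)

/-- `f = h + conj g` belongs to `S_H(K)`: the `K`-quasiconformal members of `S_H`. -/
def IsSHK (K : ℝ) (h g : ℂ → ℂ) : Prop :=
  IsSH h g ∧
  ∀ z ∈ ball (0 : ℂ) 1,
    ‖deriv g z‖ ≤ (K - 1) / (K + 1) * ‖deriv h z‖

/-- The order `α_K = sup_{f ∈ S_H(K)} |h''(0)|/2` of the class `S_H(K)`. -/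
noncomputable def orderSHK (K : ℝ) : ℝ :=
  sSup {x : ℝ | ∃ h g : ℂ → ℂ, IsSHK K h g ∧ x = ‖deriv (deriv h) 0‖ / 2}

open ComplexConjugate

noncomputable def diskAut (w z : ℂ) : ℂ := (z + w) / (1 + conj w * z)

section DiskAut

variable {w z : ℂ}

lemma one_sub_conj_mul_self_ne_zero (hw : w ∈ ball (0 : ℂ) 1) : 1 - conj w * w ≠ 0 := by
  rw [mem_ball_zero_iff] at hw
  rw [Complex.conj_mul', ← ofReal_pow, ← ofReal_one, ← ofReal_sub, ofReal_ne_zero]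
  nlinarith [norm_nonneg w]

lemma one_add_conj_mul_ne_zero (hw : w ∈ ball (0 : ℂ) 1) (hz : z ∈ ball (0 : ℂ) 1) :
    1 + conj w * z ≠ 0 := by
  rw [mem_ball_zero_iff] at hw hz
  intro h
  have : ‖conj w * z‖ = 1 := by rw [show conj w * z = -1 by linear_combination h]; simp
  rw [norm_mul, Complex.norm_conj] at this
  nlinarith [norm_nonneg w, norm_nonneg z]

lemma diskAut_zero (w : ℂ) : diskAut w 0 = w := by simp [diskAut]

lemma mapsTo_diskAut (hw : w ∈ ball (0 : ℂ) 1) :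
    Set.MapsTo (diskAut w) (ball 0 1) (ball 0 1) := by
  intro z hz
  have hden := one_add_conj_mul_ne_zero hw hz
  rw [mem_ball_zero_iff] at hw hz ⊢
  -- `|1 + w̄z|² - |z + w|² = (1 - |w|²)(1 - |z|²)`
  have key : normSq (z + w) < normSq (1 + conj w * z) := by
    have hw' : normSq w < 1 := by rw [normSq_eq_norm_sq]; nlinarith [norm_nonneg w]
    have hz' : normSq z < 1 := by rw [normSq_eq_norm_sq]; nlinarith [norm_nonneg z]
    simp only [normSq_apply, add_re, add_im, mul_re, mul_im, one_re, one_im, conj_re,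
      conj_im] at *
    nlinarith
  rw [diskAut, norm_div, div_lt_one (norm_pos_iff.2 hden)]
  simpa [Complex.norm_def] using Real.sqrt_lt_sqrt (normSq_nonneg _) key

lemma injOn_diskAut (hw : w ∈ ball (0 : ℂ) 1) : Set.InjOn (diskAut w) (ball 0 1) := by
  intro a ha b hb hab
  rw [diskAut, diskAut, div_eq_div_iff (one_add_conj_mul_ne_zero hw ha)
    (one_add_conj_mul_ne_zero hw hb)] at hab
  have : (a - b) * (1 - conj w * w) = 0 := by linear_combination hab
  exact sub_eq_zero.1 ((mul_eq_zero.1 this).resolve_right (one_sub_conj_mul_self_ne_zero hw))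

lemma hasDerivAt_diskAut (hz : 1 + conj w * z ≠ 0) :
    HasDerivAt (diskAut w) ((1 - conj w * w) / (1 + conj w * z) ^ 2) z := by
  have hden : HasDerivAt (fun z => 1 + conj w * z) (conj w) z := by
    simpa using ((hasDerivAt_id z).const_mul (conj w)).const_add 1
  have hnum : HasDerivAt (fun z => z + w) 1 z := (hasDerivAt_id z).add_const w
  exact (hnum.div hden hz).congr_deriv (by ring)

end DiskAut

/-- With `c = (1 - |w|²) h'(w)`, the Koebe transform `(f ∘ diskAut w - f w) / c` of `f = h + conj g`
has analytic part `koebeTransform h w c` and co-analytic part `koebeTransform g w (conj c)`. -/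
noncomputable def koebeTransform (φ : ℂ → ℂ) (w c z : ℂ) : ℂ := (φ (diskAut w z) - φ w) / c

section KoebeTransform

variable {φ : ℂ → ℂ} {w c z : ℂ}

lemma hasDerivAt_koebeTransform (hφ : DifferentiableOn ℂ φ (ball 0 1))
    (hw : w ∈ ball (0 : ℂ) 1) (hz : z ∈ ball (0 : ℂ) 1) :
    HasDerivAt (koebeTransform φ w c)
      (deriv φ (diskAut w z) * ((1 - conj w * w) / (1 + conj w * z) ^ 2) / c) z := by
  have hφz : HasDerivAt φ (deriv φ (diskAut w z)) (diskAut w z) :=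
    (hφ.differentiableAt (isOpen_ball.mem_nhds (mapsTo_diskAut hw hz))).hasDerivAt
  exact ((hφz.comp z (hasDerivAt_diskAut (one_add_conj_mul_ne_zero hw hz))).sub_const
    (φ w)).div_const c

lemma deriv_deriv_koebeTransform_zero (hφ : DifferentiableOn ℂ φ (ball 0 1))
    (hw : w ∈ ball (0 : ℂ) 1) :
    deriv (deriv (koebeTransform φ w c)) 0 =
      (1 - conj w * w) * ((1 - conj w * w) * deriv (deriv φ) w - 2 * conj w * deriv φ w) / c := by
  have h0 : (0 : ℂ) ∈ ball (0 : ℂ) 1 := mem_ball_self one_pos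
  have hderiv : deriv (koebeTransform φ w c) =ᶠ[nhds 0]
      fun z => deriv φ (diskAut w z) * ((1 - conj w * w) / (1 + conj w * z) ^ 2) / c := by
    filter_upwards [isOpen_ball.mem_nhds h0] with z hz
    exact (hasDerivAt_koebeTransform hφ hw hz).deriv
  have hden : HasDerivAt (fun z => (1 + conj w * z) ^ 2) (2 * conj w) 0 := by
    simpa using (((hasDerivAt_id (0 : ℂ)).const_mul (conj w)).const_add 1).fun_pow 2
  have hφ' : HasDerivAt (deriv φ) (deriv (deriv φ) w) (diskAut w 0) := by
    rw [diskAut_zero]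
    exact ((hφ.analyticOnNhd isOpen_ball).deriv w hw).differentiableAt.hasDerivAt
  have hfactor := (hasDerivAt_const (0 : ℂ) (1 - conj w * w)).fun_div hden (by simp)
  have hcomp : HasDerivAt (fun z => deriv φ (diskAut w z) *
      ((1 - conj w * w) / (1 + conj w * z) ^ 2) / c) _ 0 :=
    ((hφ'.comp 0 (hasDerivAt_diskAut (by simp))).fun_mul hfactor).div_const c
  rw [hderiv.deriv_eq, hcomp.deriv]
  simp only [Function.comp_apply, diskAut_zero]
  ring

end KoebeTransform

lemma IsSHK.deriv_ne_zero {K : ℝ} {h g : ℂ → ℂ} (hf : IsSHK K h g) {z : ℂ}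
    (hz : z ∈ ball (0 : ℂ) 1) : deriv h z ≠ 0 := by
  have ⟨⟨_, _, _, _, _, hsp, _⟩, _⟩ := hf
  exact norm_pos_iff.1 ((norm_nonneg _).trans_lt (hsp z hz))

lemma koebeTransform_add_conj (h g : ℂ → ℂ) (w c z : ℂ) :
    koebeTransform h w c z + conj (koebeTransform g w (conj c) z) =
      ((h (diskAut w z) + conj (g (diskAut w z))) - (h w + conj (g w))) / c := by
  simp only [koebeTransform, map_div₀, map_sub, conj_conj]
  ring

theorem isSHK_koebeTransform {K : ℝ} {h g : ℂ → ℂ} (hf : IsSHK K h g) {w : ℂ}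
    (hw : w ∈ ball (0 : ℂ) 1) :
    IsSHK K (koebeTransform h w ((1 - conj w * w) * deriv h w))
      (koebeTransform g w (conj ((1 - conj w * w) * deriv h w))) := by
  set c := (1 - conj w * w) * deriv h w
  have hh'w := hf.deriv_ne_zero hw
  have hc0 : c ≠ 0 := mul_ne_zero (one_sub_conj_mul_self_ne_zero hw) hh'w
  obtain ⟨⟨hdh, hdg, -, -, -, hsp, hinj⟩, hqc⟩ := hf
  have hH z (hz : z ∈ ball (0 : ℂ) 1) := hasDerivAt_koebeTransform (c := c) hdh hw hz
  have hG z (hz : z ∈ ball (0 : ℂ) 1) := hasDerivAt_koebeTransform (c := conj c) hdg hw hz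
  have hscale z (hz : z ∈ ball (0 : ℂ) 1) :
      0 < ‖(1 - conj w * w) / (1 + conj w * z) ^ 2‖ / ‖c‖ :=
    div_pos (norm_pos_iff.2 (div_ne_zero (one_sub_conj_mul_self_ne_zero hw)
      (pow_ne_zero 2 (one_add_conj_mul_ne_zero hw hz)))) (norm_pos_iff.2 hc0)
  have hnormH z (hz : z ∈ ball (0 : ℂ) 1) :
      ‖deriv (koebeTransform h w c) z‖ =
        ‖deriv h (diskAut w z)‖ * (‖(1 - conj w * w) / (1 + conj w * z) ^ 2‖ / ‖c‖) := by
    rw [(hH z hz).deriv, norm_div, norm_mul, mul_div_assoc]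
  have hnormG z (hz : z ∈ ball (0 : ℂ) 1) :
      ‖deriv (koebeTransform g w (conj c)) z‖ =
        ‖deriv g (diskAut w z)‖ * (‖(1 - conj w * w) / (1 + conj w * z) ^ 2‖ / ‖c‖) := by
    rw [(hG z hz).deriv, norm_div, norm_mul, mul_div_assoc, Complex.norm_conj]
  refine ⟨⟨fun z hz => (hH z hz).differentiableAt.differentiableWithinAt,
    fun z hz => (hG z hz).differentiableAt.differentiableWithinAt,
    by simp [koebeTransform, diskAut_zero], by simp [koebeTransform, diskAut_zero], ?_,
    fun z hz => ?_, fun a ha b hb hab => ?_⟩, fun z hz => ?_⟩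
  · rw [(hH 0 (mem_ball_self one_pos)).deriv, diskAut_zero, mul_zero, add_zero, one_pow, div_one,
      mul_comm]
    exact div_self hc0
  · rw [hnormG z hz, hnormH z hz]
    exact mul_lt_mul_of_pos_right (hsp _ (mapsTo_diskAut hw hz)) (hscale z hz)
  · simp only [koebeTransform_add_conj, div_left_inj' hc0, sub_left_inj] at hab
    exact injOn_diskAut hw ha hb (hinj (mapsTo_diskAut hw ha) (mapsTo_diskAut hw hb) hab)
  · rw [hnormG z hz, hnormH z hz, ← mul_assoc]
    exact mul_le_mul_of_nonneg_right (hqc _ (mapsTo_diskAut hw hz)) (hscale z hz).le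

lemma bddAbove_of_orderSHK_pos {K : ℝ} (hα : 0 < orderSHK K) :
    BddAbove {x : ℝ | ∃ h g : ℂ → ℂ, IsSHK K h g ∧ x = ‖deriv (deriv h) 0‖ / 2} := by
  by_contra hB
  rw [orderSHK, Real.sSup_of_not_bddAbove hB] at hα
  exact lt_irrefl 0 hα

lemma IsSHK.norm_deriv_deriv_zero_le {K : ℝ} {h g : ℂ → ℂ} (hf : IsSHK K h g)
    (hα : 0 < orderSHK K) : ‖deriv (deriv h) 0‖ ≤ 2 * orderSHK K := by
  have := le_csSup (bddAbove_of_orderSHK_pos hα) ⟨h, g, hf, rfl⟩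
  rw [orderSHK]
  linarith

noncomputable def preSchwarzBound (α r : ℝ) : ℝ := (α + 1) / (1 - r) + (α - 1) / (1 + r)

lemma IsSHK.norm_deriv_deriv_le {K : ℝ} {h g : ℂ → ℂ} (hf : IsSHK K h g)
    (hα : 0 < orderSHK K) {w : ℂ} (hw : w ∈ ball (0 : ℂ) 1) :
    ‖deriv (deriv h) w‖ ≤ preSchwarzBound (orderSHK K) ‖w‖ * ‖deriv h w‖ := by
  have hkoebe := (isSHK_koebeTransform hf hw).norm_deriv_deriv_zero_le hα
  have hh'w := hf.deriv_ne_zero hw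
  rw [deriv_deriv_koebeTransform_zero hf.1.1 hw, mul_div_mul_left _ _
    (one_sub_conj_mul_self_ne_zero hw), norm_div, div_le_iff₀ (norm_pos_iff.2 hh'w)] at hkoebe
  set r := ‖w‖
  have hr : r < 1 := mem_ball_zero_iff.1 hw
  have hr0 : 0 ≤ r := norm_nonneg w
  have hpos : 0 < 1 - r ^ 2 := by nlinarith
  have hreal : 1 - conj w * w = ((1 - r ^ 2 : ℝ) : ℂ) := by
    rw [Complex.conj_mul']; push_cast; rfl
  have htriangle := norm_sub_norm_le (((1 - r ^ 2 : ℝ) : ℂ) * deriv (deriv h) w)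
    (2 * conj w * deriv h w)
  rw [norm_mul, norm_mul, norm_mul, norm_real, Real.norm_of_nonneg hpos.le, Complex.norm_conj,
    ← hreal] at htriangle
  norm_num at htriangle
  have hbound : (1 - r ^ 2) * preSchwarzBound (orderSHK K) r = 2 * orderSHK K + 2 * r := by
    rw [preSchwarzBound]
    field_simp [show 1 - r ≠ 0 by linarith, show 1 + r ≠ 0 by linarith]
    ring
  refine le_of_mul_le_mul_left ?_ hpos
  calc (1 - r ^ 2) * ‖deriv (deriv h) w‖ ≤ (2 * orderSHK K + 2 * r) * ‖deriv h w‖ := by linarith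
    _ = (1 - r ^ 2) * (preSchwarzBound (orderSHK K) r * ‖deriv h w‖) := by rw [← hbound]; ring

section Ray

variable {z : ℂ} {t : ℝ}

lemma ofReal_mul_mem_ball (hz : z ∈ ball (0 : ℂ) 1) (ht : t ∈ Set.Icc (0 : ℝ) 1) :
    (t : ℂ) * z ∈ ball (0 : ℂ) 1 := by
  rw [mem_ball_zero_iff] at hz ⊢
  rw [norm_mul, norm_real, Real.norm_of_nonneg ht.1]
  nlinarith [ht.2, norm_nonneg z]

lemma hasDerivAt_comp_ofReal_mul {φ : ℂ → ℂ} (hφ : DifferentiableAt ℂ φ (t * z)) :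
    HasDerivAt (fun s : ℝ => φ (s * z)) (deriv φ (t * z) * z) t :=
  (hφ.hasDerivAt.comp (t : ℂ) (hasDerivAt_mul_const z)).comp_ofReal

variable {L M : ℝ → ℝ}

lemma hasDerivAt_comp_mul_norm (hL : ∀ s ∈ Set.Ico (0 : ℝ) 1, HasDerivAt L (M s) s)
    (hz : z ∈ ball (0 : ℂ) 1) (ht : t ∈ Set.Icc (0 : ℝ) 1) :
    HasDerivAt (fun s => L (s * ‖z‖)) (M (t * ‖z‖) * ‖z‖) t := by
  have hz' := mem_ball_zero_iff.1 hz
  have hmem : t * ‖z‖ ∈ Set.Ico (0 : ℝ) 1 :=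
    ⟨mul_nonneg ht.1 (norm_nonneg z), by nlinarith [ht.2, norm_nonneg z]⟩
  exact (hL _ hmem).comp t (hasDerivAt_mul_const ‖z‖)

lemma norm_sub_le_of_norm_deriv_le {f : ℂ → ℂ} (hf : DifferentiableOn ℂ f (ball 0 1))
    (hL : ∀ s ∈ Set.Ico (0 : ℝ) 1, HasDerivAt L (M s) s)
    (hM : ∀ w ∈ ball (0 : ℂ) 1, ‖deriv f w‖ ≤ M ‖w‖) (hz : z ∈ ball (0 : ℂ) 1) :
    ‖f z - f 0‖ ≤ L ‖z‖ - L 0 := by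
  have hray t (ht : t ∈ Set.Icc (0 : ℝ) 1) :
      HasDerivAt (fun s : ℝ => f (s * z) - f 0) (deriv f (t * z) * z) t :=
    (hasDerivAt_comp_ofReal_mul (hf.differentiableAt
      (isOpen_ball.mem_nhds (ofReal_mul_mem_ball hz ht)))).sub_const _
  have hbound := image_norm_le_of_norm_deriv_right_le_deriv_boundary' (a := 0) (b := 1)
    (B := fun s => L (s * ‖z‖) - L 0)
    (fun t ht => (hray t ht).continuousAt.continuousWithinAt)
    (fun t ht => (hray t (Set.Ico_subset_Icc_self ht)).hasDerivWithinAt) (by simp)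
    (fun t ht => ((hasDerivAt_comp_mul_norm hL hz ht).sub_const _).continuousAt.continuousWithinAt)
    (fun t ht => ((hasDerivAt_comp_mul_norm hL hz
      (Set.Ico_subset_Icc_self ht)).sub_const _).hasDerivWithinAt)
    (fun t ht => by
      have hmem := ofReal_mul_mem_ball hz (Set.Ico_subset_Icc_self ht)
      rw [norm_mul]
      have := hM _ hmem
      rw [norm_mul, norm_real, Real.norm_of_nonneg ht.1] at this
      exact mul_le_mul_of_nonneg_right this (norm_nonneg z))
    (Set.right_mem_Icc.2 zero_le_one)
  simpa using hbound

lemma norm_le_mul_exp_of_norm_deriv_le {φ : ℂ → ℂ} (hφ : DifferentiableOn ℂ φ (ball 0 1))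
    (hL : ∀ s ∈ Set.Ico (0 : ℝ) 1, HasDerivAt L (M s) s)
    (hM : ∀ w ∈ ball (0 : ℂ) 1, ‖deriv φ w‖ ≤ M ‖w‖ * ‖φ w‖) (hz : z ∈ ball (0 : ℂ) 1) :
    ‖φ z‖ ≤ ‖φ 0‖ * Real.exp (L ‖z‖ - L 0) := by
  set E : ℝ → ℝ := fun s => Real.exp (L (s * ‖z‖) - L 0)
  have hE t (ht : t ∈ Set.Icc (0 : ℝ) 1) :
      HasDerivAt E (E t * (M (t * ‖z‖) * ‖z‖)) t :=
    ((hasDerivAt_comp_mul_norm hL hz ht).sub_const _).exp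
  have hray t (ht : t ∈ Set.Icc (0 : ℝ) 1) :
      HasDerivAt (fun s : ℝ => φ (s * z)) (deriv φ (t * z) * z) t :=
    hasDerivAt_comp_ofReal_mul (hφ.differentiableAt
      (isOpen_ball.mem_nhds (ofReal_mul_mem_ball hz ht)))
  -- Perturbing the comparison function by `ε` makes the fencing inequality strict; then `ε → 0`.
  have hbarrier (ε : ℝ) (hε : 0 < ε) : ‖φ z‖ ≤ E 1 * (‖φ 0‖ + ε) := by
    have hB t (ht : t ∈ Set.Icc (0 : ℝ) 1) : HasDerivAt (fun s => E s * (‖φ 0‖ + s * ε))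
        (E t * (M (t * ‖z‖) * ‖z‖) * (‖φ 0‖ + t * ε) + E t * ε) t :=
      (hE t ht).mul ((hasDerivAt_mul_const ε).const_add ‖φ 0‖)
    have := image_norm_le_of_norm_deriv_right_lt_deriv_boundary' (a := 0) (b := 1)
      (fun t ht => (hray t ht).continuousAt.continuousWithinAt)
      (fun t ht => (hray t (Set.Ico_subset_Icc_self ht)).hasDerivWithinAt) (by simp [E])
      (fun t ht => (hB t ht).continuousAt.continuousWithinAt)
      (fun t ht => (hB t (Set.Ico_subset_Icc_self ht)).hasDerivWithinAt)
      (fun t ht hnorm => by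
        have hmem := ofReal_mul_mem_ball hz (Set.Ico_subset_Icc_self ht)
        have hM' := hM _ hmem
        rw [norm_mul, norm_real, Real.norm_of_nonneg ht.1, hnorm] at hM'
        rw [norm_mul]
        have : 0 < E t * ε := mul_pos (Real.exp_pos _) hε
        nlinarith [norm_nonneg z])
      (Set.right_mem_Icc.2 zero_le_one)
    simpa using this
  refine le_of_forall_pos_le_add fun ε hε => ?_
  have := hbarrier (ε / E 1) (div_pos hε (Real.exp_pos _))
  rw [mul_add, mul_div_cancel₀ _ (Real.exp_pos _).ne', mul_comm] at this
  simpa [E] using this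

end Ray

noncomputable def preSchwarzPrimitive (α s : ℝ) : ℝ :=
  (α - 1) * Real.log (1 + s) - (α + 1) * Real.log (1 - s)

section PreSchwarzPrimitive

variable {α s : ℝ}

lemma hasDerivAt_preSchwarzPrimitive (hs : s ∈ Set.Ico (0 : ℝ) 1) :
    HasDerivAt (preSchwarzPrimitive α) (preSchwarzBound α s) s := by
  have h1 : 1 + s ≠ 0 := by linarith [hs.1]
  have h2 : 1 - s ≠ 0 := by linarith [hs.2]
  have hplus := (((hasDerivAt_id' s).const_add 1).log h1).const_mul (α - 1)
  have hminus := (((hasDerivAt_id' s).const_sub 1).log h2).const_mul (α + 1)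
  refine (hplus.sub hminus).congr_deriv ?_
  rw [preSchwarzBound]
  field_simp
  ring

lemma preSchwarzPrimitive_zero (α : ℝ) : preSchwarzPrimitive α 0 = 0 := by
  simp [preSchwarzPrimitive]

lemma exp_preSchwarzPrimitive_le (hα : 0 ≤ α) (hs : s ∈ Set.Ico (0 : ℝ) 1) :
    Real.exp (preSchwarzPrimitive α s) ≤ 2 ^ α * (1 - s) ^ (-(α + 1)) := by
  have h1 : 0 < 1 + s := by linarith [hs.1]
  have h2 : 0 < 1 - s := by linarith [hs.2]
  have e1 : Real.exp ((α - 1) * Real.log (1 + s)) = (1 + s) ^ (α - 1) := by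
    rw [Real.rpow_def_of_pos h1, mul_comm]
  have e2 : Real.exp (-((α + 1) * Real.log (1 - s))) = (1 - s) ^ (-(α + 1)) := by
    rw [Real.rpow_def_of_pos h2]; ring_nf
  rw [preSchwarzPrimitive, sub_eq_add_neg, Real.exp_add, e1, e2]
  refine mul_le_mul_of_nonneg_right ?_ (Real.rpow_nonneg h2.le _)
  rcases le_total 1 α with hα1 | hα1
  · calc (1 + s) ^ (α - 1) ≤ 2 ^ (α - 1) := by gcongr; linarith [hs.2]
      _ ≤ 2 ^ α := Real.rpow_le_rpow_of_exponent_le (by norm_num) (by linarith)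
  · calc (1 + s) ^ (α - 1) ≤ 1 :=
          Real.rpow_le_one_of_one_le_of_nonpos (by linarith [hs.1]) (by linarith)
      _ ≤ 2 ^ α := Real.one_le_rpow (by norm_num) hα

end PreSchwarzPrimitive

lemma hasDerivAt_one_sub_rpow_neg_div {α s : ℝ} (hα : α ≠ 0) (hs : s < 1) :
    HasDerivAt (fun s => (1 - s) ^ (-α) / α) ((1 - s) ^ (-(α + 1))) s := by
  have := (((hasDerivAt_id' s).const_sub 1).rpow_const (p := -α)
    (Or.inl (by linarith))).div_const α
  refine this.congr_deriv ?_
  rw [show -α - 1 = -(α + 1) by ring]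
  field_simp

section Growth

variable {K : ℝ} {h g : ℂ → ℂ} {z : ℂ}

lemma IsSHK.norm_deriv_le (hf : IsSHK K h g) (hα : 0 < orderSHK K) (hz : z ∈ ball (0 : ℂ) 1) :
    ‖deriv h z‖ ≤ 2 ^ orderSHK K * (1 - ‖z‖) ^ (-(orderSHK K + 1)) := by
  have ⟨⟨hdh, _, _, _, h'0, _, _⟩, _⟩ := hf
  have := norm_le_mul_exp_of_norm_deriv_le (hdh.deriv isOpen_ball)
    (fun s hs => hasDerivAt_preSchwarzPrimitive hs) (fun w hw => hf.norm_deriv_deriv_le hα hw) hz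
  rw [h'0, norm_one, one_mul, preSchwarzPrimitive_zero, sub_zero] at this
  exact this.trans (exp_preSchwarzPrimitive_le hα.le ⟨norm_nonneg z, mem_ball_zero_iff.1 hz⟩)

lemma IsSHK.norm_add_conj_le (hf : IsSHK K h g) (hα : 0 < orderSHK K) (hz : z ∈ ball (0 : ℂ) 1) :
    ‖h z + conj (g z)‖ ≤ 2 * 2 ^ orderSHK K / orderSHK K * (1 - ‖z‖) ^ (-orderSHK K) := by
  have ⟨⟨hdh, hdg, h0, g0, _, hsp, _⟩, _⟩ := hf
  set α := orderSHK K
  set L : ℝ → ℝ := fun s => 2 ^ α * ((1 - s) ^ (-α) / α)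
  have hL s (hs : s ∈ Set.Ico (0 : ℝ) 1) : HasDerivAt L (2 ^ α * (1 - s) ^ (-(α + 1))) s :=
    (hasDerivAt_one_sub_rpow_neg_div hα.ne' hs.2).const_mul _
  have hL0 : 0 ≤ L 0 := by positivity
  have hh := norm_sub_le_of_norm_deriv_le hdh hL (fun w hw => hf.norm_deriv_le hα hw) hz
  have hg := norm_sub_le_of_norm_deriv_le hdg hL
    (fun w hw => (hsp w hw).le.trans (hf.norm_deriv_le hα hw)) hz
  rw [h0, sub_zero] at hh
  rw [g0, sub_zero] at hg
  calc ‖h z + conj (g z)‖ ≤ ‖h z‖ + ‖g z‖ := by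
        simpa only [Complex.norm_conj] using norm_add_le (h z) (conj (g z))
    _ ≤ 2 * L ‖z‖ := by linarith
    _ = 2 * 2 ^ α / α * (1 - ‖z‖) ^ (-α) := by simp only [L]; ring

end Growth

section Integrability

variable {E F : Type*} [NormedAddCommGroup E] [NormedSpace ℝ E] [Nontrivial E]
  [FiniteDimensional ℝ E] [MeasurableSpace E] [BorelSpace E] (μ : Measure E) [μ.IsAddHaarMeasure]
  [NormedAddCommGroup F]

lemma integrableOn_ball_one_sub_norm_rpow {β : ℝ} (hβ : β < 1) :
    IntegrableOn (fun x => (1 - ‖x‖) ^ (-β)) (ball (0 : E) 1) μ := by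
  rw [integrableOn_fun_norm_addHaar μ (f := fun y => (1 - y) ^ (-β))]
  have hinterval : IntervalIntegrable (fun y : ℝ => (1 - y) ^ (-β)) volume 0 1 := by
    simpa using ((intervalIntegral.intervalIntegrable_rpow' (a := 0) (b := 1)
      (by linarith : -1 < -β)).comp_sub_left 1).symm
  have hIoo : IntegrableOn (fun y : ℝ => (1 - y) ^ (-β)) (Set.Ioo 0 1) :=
    ((intervalIntegrable_iff_integrableOn_Ioc_of_le zero_le_one).1 hinterval).mono_set
      Set.Ioo_subset_Ioc_self
  refine hIoo.mono' ?_ ((ae_restrict_iff' measurableSet_Ioo).2 (.of_forall fun y hy => ?_))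
  · refine ContinuousOn.aestronglyMeasurable (fun y hy => ?_) measurableSet_Ioo
    exact ((continuousAt_id.pow _).smul ((continuousAt_const.sub continuousAt_id).rpow_const
      (Or.inl (sub_ne_zero.2 hy.2.ne')))).continuousWithinAt
  · rw [norm_smul, norm_pow, Real.norm_of_nonneg hy.1.le,
      Real.norm_of_nonneg (Real.rpow_nonneg (by linarith [hy.2]) _)]
    exact mul_le_of_le_one_left (Real.rpow_nonneg (by linarith [hy.2]) _)
      (pow_le_one₀ hy.1.le hy.2.le)

lemma setLIntegral_ball_rpow_lt_top_of_norm_le {f : E → F} {C α p : ℝ} (hC : 0 ≤ C)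
    (hp : 0 ≤ p) (hαp : α * p < 1)
    (hf : ∀ x ∈ ball (0 : E) 1, ‖f x‖ ≤ C * (1 - ‖x‖) ^ (-α)) :
    ∫⁻ x in ball (0 : E) 1, ENNReal.ofReal (‖f x‖ ^ p) ∂μ < ⊤ := by
  calc ∫⁻ x in ball (0 : E) 1, ENNReal.ofReal (‖f x‖ ^ p) ∂μ
      ≤ ∫⁻ x in ball (0 : E) 1, ENNReal.ofReal (C ^ p * (1 - ‖x‖) ^ (-(α * p))) ∂μ := by
        refine setLIntegral_mono' measurableSet_ball fun x hx => ENNReal.ofReal_le_ofReal ?_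
        have hx' : 0 ≤ 1 - ‖x‖ := by linarith [mem_ball_zero_iff.1 hx]
        calc ‖f x‖ ^ p ≤ (C * (1 - ‖x‖) ^ (-α)) ^ p :=
              Real.rpow_le_rpow (norm_nonneg _) (hf x hx) hp
          _ = C ^ p * (1 - ‖x‖) ^ (-(α * p)) := by
              rw [Real.mul_rpow hC (Real.rpow_nonneg hx' _), ← Real.rpow_mul hx', neg_mul]
    _ < ⊤ := ((integrableOn_ball_one_sub_norm_rpow μ hαp).const_mul (C ^ p)).lintegral_lt_top

end Integrability

theorem shk_mem_bergman_general (K : ℝ) (h g : ℂ → ℂ) (hf : IsSHK K h g)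
    (p : ℝ) (hp : 0 < p) (hpα : p < 1 / orderSHK K) :
    (∫⁻ z in ball (0 : ℂ) 1,
        ENNReal.ofReal (‖h z + (starRingEnd ℂ) (g z)‖ ^ p)) < ⊤ := by
  have hα : 0 < orderSHK K := one_div_pos.1 (hp.trans hpα)
  have hαp : orderSHK K * p < 1 := by rwa [lt_div_iff₀ hα, mul_comm] at hpα
  exact setLIntegral_ball_rpow_lt_top_of_norm_le volume (by positivity) hp.le hαp
    fun z hz => hf.norm_add_conj_le hα hz

/-- **Theorem 4 (i).** Every `f ∈ S_H(K)` belongs to the harmonic Bergman space `aᵖ`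
for all `0 < p < 1/α_K`. -/
theorem shk_mem_bergman (K : ℝ) (hK : 1 ≤ K) (h g : ℂ → ℂ) (hf : IsSHK K h g)
    (p : ℝ) (hp : 0 < p) (hpα : p < 1 / orderSHK K) :
    (∫⁻ z in ball (0 : ℂ) 1,
        ENNReal.ofReal (‖h z + (starRingEnd ℂ) (g z)‖ ^ p)) < ⊤ :=
  shk_mem_bergman_general K h g hf p hp hpα
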